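/- arXiv:2111.10761 — 2 statements merged into one kernel-verified Lean document; each statement's English description precedes it below -/
import Mathlib

section
/- Let H be a complex Banach space and let S and C be continuous linear operators on H such that S and (1/2)·I + C are invertible, the Calderón identity S ∘ S = C ∘ C − (1/4)·I holds, and C is a compact operator. Then the left-preconditioned EFIE operator V₁⁻¹ ∘ S, where V₁⁻¹ := −((1/2)·I + C)⁻¹ ∘ S, is a compact perturbation of (1/2)·I: the operator V₁⁻¹ ∘ S − (1/2)·I is compact (indeed it equals −C). Likewise, the right-preconditioned operator S ∘ V₂⁻¹, with V₂⁻¹ := S⁻¹ ∘ ((1/2)·I + C), satisfies that S ∘ V₂⁻¹ − (1/2)·I is compact. -/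
/-- With `S`, `(1/2)I + C` invertible, the Calderón identity, and `C` compact, the
left-preconditioned EFIE operator `V₁⁻¹S − (1/2)I` is compact (indeed equals `−C`),
and likewise `S V₂⁻¹ − (1/2)I` is compact. -/
theorem preconditioned_efie_compact_perturbation
    {H : Type*} [NormedAddCommGroup H] [NormedSpace ℂ H] [CompleteSpace H]
    (S C : H →L[ℂ] H) (hS : IsUnit S)
    (hC : IsUnit ((1 / 2 : ℂ) • (1 : H →L[ℂ] H) + C))
    (hCalderon : S * S = C * C - (1 / 4 : ℂ) • (1 : H →L[ℂ] H))
    (hCc : IsCompactOperator (⇑C)) :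
    ((-(Ring.inverse ((1 / 2 : ℂ) • (1 : H →L[ℂ] H) + C) * S)) * S -
        (1 / 2 : ℂ) • (1 : H →L[ℂ] H) = -C) ∧
    IsCompactOperator
      (⇑((-(Ring.inverse ((1 / 2 : ℂ) • (1 : H →L[ℂ] H) + C) * S)) * S -
        (1 / 2 : ℂ) • (1 : H →L[ℂ] H))) ∧
    IsCompactOperator
      (⇑(S * (Ring.inverse S * ((1 / 2 : ℂ) • (1 : H →L[ℂ] H) + C)) -
        (1 / 2 : ℂ) • (1 : H →L[ℂ] H))) := by
  set A : H →L[ℂ] H := (1 / 2 : ℂ) • (1 : H →L[ℂ] H) + C with hA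
  have hfac : S * S = A * (C - (1 / 2 : ℂ) • (1 : H →L[ℂ] H)) := by
    rw [hCalderon, hA, add_mul, mul_sub, mul_sub, smul_mul_assoc, one_mul,
      mul_smul_comm, mul_one, smul_smul]
    norm_num
  have key1 : (-(Ring.inverse A * S)) * S - (1 / 2 : ℂ) • (1 : H →L[ℂ] H) = -C := by
    have h : (Ring.inverse A * S) * S = C - (1 / 2 : ℂ) • (1 : H →L[ℂ] H) := by
      rw [mul_assoc, hfac, ← mul_assoc, Ring.inverse_mul_cancel _ hC, one_mul]
    rw [neg_mul, h]
    abel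
  have key2 : S * (Ring.inverse S * A) - (1 / 2 : ℂ) • (1 : H →L[ℂ] H) = C := by
    rw [← mul_assoc, Ring.mul_inverse_cancel _ hS, one_mul, hA]
    abel
  refine ⟨key1, ?_, ?_⟩
  · rw [key1]
    simpa using hCc.neg
  · rw [key2]
    exact hCc
end

section
/- Fix an integer N ≥ 1 and a real number α, and for j = 1, …, N set a_j = (2/(2N+1))·sin²(jπ/(2N+1)) and b_j = cos²(jπ/(2N+1)). Assume d_j := 1 + b_j(e^{−iα} − 1) ≠ 0 for all j, and define the rotated-branch-cut Padé coefficients A_j = e^{−iα/2} a_j / d_j², B_j = b_j e^{−iα} / d_j, C₀ = e^{iα/2}(1 + Σ_{j=1}^{N} a_j(e^{−iα}−1)/d_j), and R₀ = C₀ + Σ_{j=1}^{N} A_j/B_j. Then for every z ∈ ℂ such that 1 + B_j z ≠ 0 for all j, setting z_α := e^{−iα}(1+z) − 1, the exact identity e^{iα/2}·(1 + Σ_{j=1}^{N} a_j z_α/(1 + b_j z_α)) = R₀ − Σ_{j=1}^{N} A_j/(B_j(1 + B_j z)) holds. -/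
/-!
With `e = e^{-iα}`, `d = 1 + b(e-1)` and `B = b e/d`, the substitution `z_α = e(1+z) - 1` turns
the denominator `1 + b z_α` of a Padé term into `d + b e z = d(1 + B z)`, so each term is a
constant plus a simple pole in `z`: `a z_α/(1 + b z_α) = a(e-1)/d + a e z/(d(d + b e z))`.
After the prefactor `e^{iα/2}` the pole part is `A z/(1 + B z) = A/B - A/(B(1 + B z))`, and all
constants collect into `R₀`. Here `B_j ≠ 0` since the nodes `jπ/(2N+1)`, `j ≤ N`, lie in
`[0, π/2)`, where the cosine does not vanish.
-/

open Complex Real Finset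

theorem div_sub_div_mul_one_add_mul {K : Type*} [Field K] (A B z : K) (hB : B ≠ 0)
    (hBz : 1 + B * z ≠ 0) :
    A / B - A / (B * (1 + B * z)) = A * z / (1 + B * z) := by
  field_simp
  ring

theorem pade_term_rotate {K : Type*} [Field K] (a b e z d : K)
    (hd : d = 1 + b * (e - 1)) (hd₀ : d ≠ 0) (hdz : d + b * e * z ≠ 0) :
    a * (e * (1 + z) - 1) / (1 + b * (e * (1 + z) - 1)) =
      a * (e - 1) / d + a * e * z / (d * (d + b * e * z)) := by
  have hden : 1 + b * (e * (1 + z) - 1) = d + b * e * z := by rw [hd]; ring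
  rw [hden, div_add_div _ _ hd₀ (mul_ne_zero hd₀ hdz),
    div_eq_div_iff hdz (mul_ne_zero hd₀ (mul_ne_zero hd₀ hdz)), hd]
  ring

theorem pade_pole_rotate {K : Type*} [Field K] (c a b e z d : K) (hd₀ : d ≠ 0) :
    c * e * a / d ^ 2 * z / (1 + b * e / d * z) = c * (a * e * z / (d * (d + b * e * z))) := by
  have hden : d + b * e * z = d * (1 + b * e / d * z) := by field_simp
  rw [hden]
  field_simp

theorem cos_sq_pade_node_pos (j N : ℕ) (hj : j ≤ N) :
    0 < Real.cos (j * π / (2 * N + 1)) ^ 2 := by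
  have hN : (0 : ℝ) < 2 * N + 1 := by positivity
  have hjN : (j : ℝ) ≤ N := by exact_mod_cast hj
  refine pow_pos (Real.cos_pos_of_mem_Ioo ⟨?_, ?_⟩) 2
  · have : 0 ≤ j * π / (2 * N + 1) := by positivity
    linarith [Real.pi_pos]
  · rw [div_lt_div_iff₀ hN two_pos]
    nlinarith [Real.pi_pos]

theorem rotated_pade_partial_fractions_general
    (N : ℕ) (α : ℝ)
    (a b : ℕ → ℝ)
    (hb : ∀ j, b j = Real.cos (j * Real.pi / (2 * N + 1)) ^ 2)
    (d : ℕ → ℂ)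
    (hd : ∀ j, d j = 1 + (b j : ℂ) * (Complex.exp (-Complex.I * α) - 1))
    (hdne : ∀ j ∈ Finset.Icc 1 N, d j ≠ 0)
    (A B : ℕ → ℂ)
    (hA : ∀ j, A j = Complex.exp (-Complex.I * α / 2) * (a j : ℂ) / (d j) ^ 2)
    (hB : ∀ j, B j = (b j : ℂ) * Complex.exp (-Complex.I * α) / d j)
    (C₀ : ℂ)
    (hC₀ : C₀ = Complex.exp (Complex.I * α / 2) *
      (1 + ∑ j ∈ Finset.Icc 1 N, (a j : ℂ) * (Complex.exp (-Complex.I * α) - 1) / d j))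
    (R₀ : ℂ) (hR₀ : R₀ = C₀ + ∑ j ∈ Finset.Icc 1 N, A j / B j)
    (z : ℂ) (hz : ∀ j ∈ Finset.Icc 1 N, 1 + B j * z ≠ 0)
    (zα : ℂ) (hzα : zα = Complex.exp (-Complex.I * α) * (1 + z) - 1) :
    Complex.exp (Complex.I * α / 2) *
        (1 + ∑ j ∈ Finset.Icc 1 N, (a j : ℂ) * zα / (1 + (b j : ℂ) * zα)) =
      R₀ - ∑ j ∈ Finset.Icc 1 N, A j / (B j * (1 + B j * z)) := by
  set E := Complex.exp (Complex.I * α / 2)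
  set e := Complex.exp (-Complex.I * α)
  have hhalf : Complex.exp (-Complex.I * α / 2) = E * e := by
    rw [← Complex.exp_add]; ring_nf
  have hterm : ∀ j ∈ Finset.Icc 1 N, E * ((a j : ℂ) * zα / (1 + (b j : ℂ) * zα)) =
      E * ((a j : ℂ) * (e - 1) / d j) + (A j / B j - A j / (B j * (1 + B j * z))) := by
    intro j hj
    have hdj := hdne j hj
    have hbj : (b j : ℂ) ≠ 0 := by
      rw [hb]; exact_mod_cast (cos_sq_pade_node_pos j N (Finset.mem_Icc.1 hj).2).ne'
    have hBj : B j ≠ 0 := by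
      rw [hB]; exact div_ne_zero (mul_ne_zero hbj (Complex.exp_ne_zero _)) hdj
    have hdz : d j + b j * e * z ≠ 0 := by
      have hfactor : d j + b j * e * z = d j * (1 + B j * z) := by rw [hB]; field_simp
      rw [hfactor]; exact mul_ne_zero hdj (hz j hj)
    rw [div_sub_div_mul_one_add_mul _ _ _ hBj (hz j hj), hA, hhalf, hB,
      pade_pole_rotate _ _ _ _ _ _ hdj, hzα, pade_term_rotate _ _ _ _ _ (hd j) hdj hdz, mul_add]
  rw [hR₀, hC₀, mul_add, Finset.mul_sum, Finset.sum_congr rfl hterm, Finset.sum_add_distrib,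
    Finset.sum_sub_distrib, mul_add, Finset.mul_sum]
  ring

/-- Exact partial-fraction identity for the rotating branch-cut Padé approximation
of `(1+z)^{1/2}` (paper's equation (13) with coefficients `A_j`, `B_j`, `C₀`, `R₀`):
`e^{iα/2}·(1 + Σ_j a_j z_α/(1 + b_j z_α)) = R₀ − Σ_j A_j/(B_j(1 + B_j z))`, where
`z_α = e^{−iα}(1+z) − 1`. -/
theorem rotated_pade_partial_fractions
    (N : ℕ) (hN : 1 ≤ N) (α : ℝ)
    (a b : ℕ → ℝ)
    (ha : ∀ j, a j = (2 / (2 * N + 1)) * Real.sin (j * Real.pi / (2 * N + 1)) ^ 2)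
    (hb : ∀ j, b j = Real.cos (j * Real.pi / (2 * N + 1)) ^ 2)
    (d : ℕ → ℂ)
    (hd : ∀ j, d j = 1 + (b j : ℂ) * (Complex.exp (-Complex.I * α) - 1))
    (hdne : ∀ j ∈ Finset.Icc 1 N, d j ≠ 0)
    (A B : ℕ → ℂ)
    (hA : ∀ j, A j = Complex.exp (-Complex.I * α / 2) * (a j : ℂ) / (d j) ^ 2)
    (hB : ∀ j, B j = (b j : ℂ) * Complex.exp (-Complex.I * α) / d j)
    (C₀ : ℂ)
    (hC₀ : C₀ = Complex.exp (Complex.I * α / 2) *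
      (1 + ∑ j ∈ Finset.Icc 1 N, (a j : ℂ) * (Complex.exp (-Complex.I * α) - 1) / d j))
    (R₀ : ℂ) (hR₀ : R₀ = C₀ + ∑ j ∈ Finset.Icc 1 N, A j / B j)
    (z : ℂ) (hz : ∀ j ∈ Finset.Icc 1 N, 1 + B j * z ≠ 0)
    (zα : ℂ) (hzα : zα = Complex.exp (-Complex.I * α) * (1 + z) - 1) :
    Complex.exp (Complex.I * α / 2) *
        (1 + ∑ j ∈ Finset.Icc 1 N, (a j : ℂ) * zα / (1 + (b j : ℂ) * zα)) =
      R₀ - ∑ j ∈ Finset.Icc 1 N, A j / (B j * (1 + B j * z)) :=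
  rotated_pade_partial_fractions_general N α a b hb d hd hdne A B hA hB C₀ hC₀ R₀ hR₀ z hz zα hzα
end
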